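/- arXiv:1501.01892 — 9 statements merged into one kernel-verified Lean document; each statement's English description precedes it below -/
import Mathlib

section
/- Under the standing assumptions (h C² with h(0)=0, h'>0, h''≥0; λ>0 C¹ with (hλ)'>0; δ>0; y_∞ < y₀ < 0 the roots of hλ + h' + δ = 0 and hλ + δ = 0 respectively), the expression D(y) := (δ + 2hλ)(h')² + (δ² + 2δhλ + h²λ² + h²λ')h' - h(δ + hλ)h'' is strictly negative for all y in (y_∞, y₀]. -/
open Real

/-!
On `(y_∞, y₀]` the quantity `a = δ + hλ` is `≤ 0` (monotonicity of `hλ` and `y ≤ y₀`) while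
`a + h'` is `> 0` (monotonicity of `hλ + h'` and `y > y_∞`); in particular `h < 0` there. The
numerator splits as `D = a (h'(a + h') - h h'') + h h' (hλ)'`, whose first summand is `≤ 0` and
whose second is `< 0`.
-/

theorem freeBoundaryNumerator_neg {δ h l l' p q : ℝ} (ha : δ + h * l ≤ 0)
    (hap : 0 < δ + h * l + p) (hh : h < 0) (hp : 0 < p) (hq : 0 ≤ q)
    (hhl' : 0 < p * l + h * l') :
    (δ + 2 * h * l) * p ^ 2 + (δ ^ 2 + 2 * δ * h * l + h ^ 2 * l ^ 2 + h ^ 2 * l') * p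
      - h * (δ + h * l) * q < 0 := by
  have hsplit : (δ + 2 * h * l) * p ^ 2 + (δ ^ 2 + 2 * δ * h * l + h ^ 2 * l ^ 2 + h ^ 2 * l') * p
      - h * (δ + h * l) * q
      = (δ + h * l) * (p * (δ + h * l + p) - h * q) + h * p * (p * l + h * l') := by
    ring
  have hbracket : 0 < p * (δ + h * l + p) - h * q := by
    nlinarith [mul_pos hp hap, mul_nonneg (neg_nonneg.mpr hh.le) hq]
  rw [hsplit]
  have hfirst := mul_nonpos_of_nonpos_of_nonneg ha hbracket.le
  have hsecond := mul_neg_of_neg_of_pos (mul_neg_of_neg_of_pos hh hp) hhl'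
  linarith

theorem stmt4_general (h lam : ℝ → ℝ) (δ y₀ yInf : ℝ)
    (hC2 : ContDiff ℝ 2 h)
    (hh' : ∀ y, 0 < deriv h y)
    (hh'' : ∀ y, 0 ≤ deriv (deriv h) y)
    (hlamC1 : ContDiff ℝ 1 lam) (hlampos : ∀ y, 0 < lam y)
    (hhlam' : ∀ y, 0 < deriv (fun z => h z * lam z) y)
    (hδ : 0 < δ)
    (hy₀ : h y₀ * lam y₀ + δ = 0)
    (hyInf : h yInf * lam yInf + deriv h yInf + δ = 0)
    (D : ℝ → ℝ)
    (hD : ∀ y, D y =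
      (δ + 2 * h y * lam y) * (deriv h y) ^ 2
      + (δ ^ 2 + 2 * δ * h y * lam y + (h y) ^ 2 * (lam y) ^ 2
          + (h y) ^ 2 * deriv lam y) * deriv h y
      - h y * (δ + h y * lam y) * deriv (deriv h) y) :
    ∀ y ∈ Set.Ioc yInf y₀, D y < 0 := by
  rintro y ⟨hyInf_lt, hy_le⟩
  have hderiv_diff : Differentiable ℝ (deriv h) :=
    ((contDiff_succ_iff_deriv (n := 1)).mp hC2).2.2.differentiable one_ne_zero
  have hmono : StrictMono fun z => h z * lam z := strictMono_of_deriv_pos hhlam'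
  have hmono' : StrictMono fun z => h z * lam z + deriv h z :=
    hmono.add_monotone (monotone_of_deriv_nonneg hderiv_diff hh'')
  have ha : δ + h y * lam y ≤ 0 := by linarith [hmono.monotone hy_le]
  have hap : 0 < δ + h y * lam y + deriv h y := by linarith [hmono' hyInf_lt]
  have hneg : h y < 0 := neg_of_mul_neg_left (by linarith) (hlampos y).le
  have hprod : deriv (fun z => h z * lam z) y = deriv h y * lam y + h y * deriv lam y :=
    deriv_mul (hC2.differentiable two_ne_zero y) (hlamC1.differentiable one_ne_zero y)
  rw [hD y]
  exact freeBoundaryNumerator_neg ha hap hneg (hh' y) (hh'' y) (hprod ▸ hhlam' y)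

/-- The numerator `D(y) = (δ+2hλ)(h')² + (δ²+2δhλ+h²λ²+h²λ')h' - h(δ+hλ)h''` of the
free-boundary derivative is strictly negative on `(y_∞, y₀]`. -/
theorem stmt4 (h lam : ℝ → ℝ) (δ y₀ yInf : ℝ)
    (hC2 : ContDiff ℝ 2 h) (hh0 : h 0 = 0)
    (hh' : ∀ y, 0 < deriv h y)
    (hh'' : ∀ y, 0 ≤ deriv (deriv h) y)
    (hlamC1 : ContDiff ℝ 1 lam) (hlampos : ∀ y, 0 < lam y)
    (hhlam' : ∀ y, 0 < deriv (fun z => h z * lam z) y)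
    (hδ : 0 < δ)
    (hy₀lt : y₀ < 0) (hyInflt : yInf < y₀)
    (hy₀ : h y₀ * lam y₀ + δ = 0)
    (hy₀uniq : ∀ z, h z * lam z + δ = 0 → z = y₀)
    (hyInf : h yInf * lam yInf + deriv h yInf + δ = 0)
    (hyInfuniq : ∀ z, h z * lam z + deriv h z + δ = 0 → z = yInf)
    (D : ℝ → ℝ)
    (hD : ∀ y, D y =
      (δ + 2 * h y * lam y) * (deriv h y) ^ 2
      + (δ ^ 2 + 2 * δ * h y * lam y + (h y) ^ 2 * (lam y) ^ 2
          + (h y) ^ 2 * deriv lam y) * deriv h y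
      - h y * (δ + h y * lam y) * deriv (deriv h) y) :
    ∀ y ∈ Set.Ioc yInf y₀, D y < 0 :=
  stmt4_general h lam δ y₀ yInf hC2 hh' hh'' hlamC1 hlampos hhlam' hδ hy₀ hyInf D hD
end

section
/- Under the standing assumptions, the function θ : (y_∞, y₀] → ℝ defined by θ(y) = -∫_y^{y₀} [((δ+2hλ)(h')² + (δ²+2δhλ+h²λ²+h²λ')h' - h(δ+hλ)h'')/(δ h' (δ+hλ+h'))](x) dx is a strictly decreasing C¹ function mapping (y_∞, y₀] bijectively onto [0, ∞), with θ(y₀) = 0 and θ(y) → +∞ as y ↘ y_∞. -/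
/-! Write `g = δ + hλ + h'`, so that `g(y_∞) = 0` and `g` is increasing. The numerator of the
integrand is `(δ + hλ) h' g + h ((hλ)' h' - (δ + hλ) h'')`, which is negative on `[y_∞, y₀]`
because there `h < 0`, `δ + hλ ≤ 0` and `g ≥ 0`. So `θ(y) = ∫_y^{y₀} u / g` with `u` continuous
and positive on `[y_∞, y₀]`: `θ` is `C¹`, strictly decreasing and vanishes at `y₀`. As `g` is
Lipschitz near `y_∞`, `g(x) ≤ K (x - y_∞)`, so the integrand is at least `c / (x - y_∞)` and `θ`
blows up logarithmically; the intermediate value theorem then gives surjectivity onto `[0, ∞)`. -/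

open Real Filter intervalIntegral
open Set Topology

lemma contDiffOn_integral_left {f : ℝ → ℝ} {U : Set ℝ} {b : ℝ} (hU : IsOpen U)
    (hUc : U.OrdConnected) (hb : b ∈ U) (hf : ContinuousOn f U) :
    ContDiffOn ℝ 1 (fun y => ∫ x in y..b, f x) U := by
  have hderiv : ∀ y ∈ U, HasDerivAt (fun y => ∫ x in y..b, f x) (-f y) y := fun y hy =>
    integral_hasDerivAt_left ((hf.mono (hUc.uIcc_subset hy hb)).intervalIntegrable)
      (hf.stronglyMeasurableAtFilter hU y hy) (hf.continuousAt (hU.mem_nhds hy))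
  refine (contDiffOn_succ_iff_deriv_of_isOpen (n := 0) hU).mpr
    ⟨fun y hy => (hderiv y hy).differentiableAt.differentiableWithinAt, by simp, ?_⟩
  exact contDiffOn_zero.mpr (hf.neg.congr fun y hy => (hderiv y hy).deriv)

lemma strictAntiOn_integral_left {f : ℝ → ℝ} {a b : ℝ} (hf : ContinuousOn f (Ioc a b))
    (hpos : ∀ x ∈ Ioc a b, 0 < f x) : StrictAntiOn (fun y => ∫ x in y..b, f x) (Ioc a b) := by
  intro y hy z hz hyz
  have hint : ∀ {s t}, s ∈ Ioc a b → t ∈ Ioc a b → IntervalIntegrable f MeasureTheory.volume s t :=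
    fun hs ht => (hf.mono (ordConnected_Ioc.uIcc_subset hs ht)).intervalIntegrable
  have hpos_yz : 0 < ∫ x in y..z, f x :=
    intervalIntegral_pos_of_pos_on (hint hy hz)
      (fun x hx => hpos x ⟨hy.1.trans hx.1, hx.2.le.trans hz.2⟩) hyz
  have hsplit := integral_add_adjacent_intervals (hint hy hz) (hint hz ⟨hz.1.trans_le hz.2, le_rfl⟩)
  dsimp only
  linarith

lemma tendsto_integral_inv_sub_atTop {a b : ℝ} (hab : a < b) :
    Tendsto (fun y => ∫ x in y..b, (x - a)⁻¹) (𝓝[>] a) atTop := by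
  have hshift : Tendsto (fun y => y - a) (𝓝[>] a) (𝓝[>] 0) := by
    refine tendsto_nhdsWithin_iff.2
      ⟨?_, eventually_nhdsWithin_of_forall fun y hy => sub_pos.2 (mem_Ioi.1 hy)⟩
    simpa using (continuous_sub_right a).continuousWithinAt.tendsto (s := Ioi a) (x := a)
  have hlog : Tendsto (fun y => log (b - a) - log (y - a)) (𝓝[>] a) atTop :=
    tendsto_atTop_add_const_left _ _
      (tendsto_neg_atBot_atTop.comp (tendsto_log_nhdsGT_zero.comp hshift))
  refine hlog.congr' ?_
  filter_upwards [self_mem_nhdsWithin] with y hy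
  rw [integral_comp_sub_right (fun x => x⁻¹), integral_inv_of_pos (sub_pos.2 hy) (sub_pos.2 hab),
    log_div (sub_pos.2 hab).ne' (sub_pos.2 hy).ne']

lemma tendsto_integral_div_atTop {u g : ℝ → ℝ} {a b : ℝ} {K : NNReal} (hab : a < b)
    (hu : ContinuousOn u (Icc a b)) (hu_pos : ∀ x ∈ Icc a b, 0 < u x)
    (hg : LipschitzOnWith K g (Icc a b)) (hga : g a = 0) (hg_pos : ∀ x ∈ Ioc a b, 0 < g x) :
    Tendsto (fun y => ∫ x in y..b, u x / g x) (𝓝[>] a) atTop := by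
  obtain ⟨x₀, hx₀, hmin⟩ := isCompact_Icc.exists_isMinOn (nonempty_Icc.2 hab.le) hu
  have hg_le : ∀ x ∈ Icc a b, g x ≤ K * (x - a) := by
    intro x hx
    have := hg.dist_le_mul x hx a (left_mem_Icc.2 hab.le)
    rw [Real.dist_eq, Real.dist_eq, hga, sub_zero, abs_of_nonneg (sub_nonneg.2 hx.1)] at this
    exact (le_abs_self _).trans this
  have hK : 0 < (K : ℝ) := by
    have := (hg_pos b ⟨hab, le_rfl⟩).trans_le (hg_le b (right_mem_Icc.2 hab.le))
    exact pos_of_mul_pos_left this (sub_pos.2 hab).le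
  have hbound : ∀ x ∈ Ioc a b, u x₀ / K * (x - a)⁻¹ ≤ u x / g x := fun x hx =>
    calc u x₀ / K * (x - a)⁻¹ = u x₀ / (K * (x - a)) := by
          rw [div_eq_mul_inv, div_eq_mul_inv, mul_inv, mul_assoc]
      _ ≤ u x / g x := div_le_div₀ (hu_pos x (Ioc_subset_Icc_self hx)).le
          (hmin (Ioc_subset_Icc_self hx)) (hg_pos x hx) (hg_le x (Ioc_subset_Icc_self hx))
  refine tendsto_atTop_mono' _ ?_
    ((tendsto_integral_inv_sub_atTop hab).const_mul_atTop (div_pos (hu_pos x₀ hx₀) hK))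
  filter_upwards [Ioc_mem_nhdsGT hab] with y hy
  have hsub : Icc y b ⊆ Ioc a b := (Icc_subset_Ioc_iff hy.2).2 ⟨hy.1, le_rfl⟩
  rw [← integral_const_mul]
  refine integral_mono_on hy.2 ?_ ?_ fun x hx => hbound x (hsub hx)
  · exact (continuousOn_const.mul ((continuousOn_id.sub continuousOn_const).inv₀ fun x hx =>
      (sub_pos.2 (hsub hx).1).ne')).intervalIntegrable_of_Icc hy.2
  · have hsub' : Icc y b ⊆ Icc a b := hsub.trans Ioc_subset_Icc_self
    exact ((hu.mono hsub').div (hg.continuousOn.mono hsub') fun x hx =>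
      (hg_pos x (hsub hx)).ne').intervalIntegrable_of_Icc hy.2

lemma bijOn_Ioc_Ici_of_strictAntiOn {θ : ℝ → ℝ} {a b : ℝ} (hab : a < b)
    (hcont : ContinuousOn θ (Ioc a b)) (hanti : StrictAntiOn θ (Ioc a b)) (hb : θ b = 0)
    (htend : Tendsto θ (𝓝[>] a) atTop) : BijOn θ (Ioc a b) (Ici 0) := by
  have hbmem : b ∈ Ioc a b := ⟨hab, le_rfl⟩
  refine ⟨fun y hy => hb ▸ hanti.antitoneOn hy hbmem hy.2, hanti.injOn, fun z hz => ?_⟩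
  obtain ⟨y, hzy, hy⟩ := ((htend.eventually_ge_atTop z).and (Ioc_mem_nhdsGT hab)).exists
  have hsub : Icc y b ⊆ Ioc a b := (Icc_subset_Ioc_iff hy.2).2 ⟨hy.1, le_rfl⟩
  obtain ⟨x, hx, rfl⟩ := intermediate_value_Icc' hy.2 (hcont.mono hsub) ⟨hb ▸ hz, hzy⟩
  exact ⟨x, hsub hx, rfl⟩

/-- `H, H', H'', L, L'` stand for `h, h', h'', λ, λ'` at a point of `[y_∞, y₀]`. -/
lemma numerator_neg_of_signs {δ H H' H'' L L' : ℝ} (hH : H < 0) (hH' : 0 < H') (hH'' : 0 ≤ H'')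
    (hA : δ + H * L ≤ 0) (hG : 0 ≤ δ + H * L + H') (hA' : 0 < H' * L + H * L') :
    (δ + 2 * H * L) * H' ^ 2 + (δ ^ 2 + 2 * δ * H * L + H ^ 2 * L ^ 2 + H ^ 2 * L') * H'
      - H * (δ + H * L) * H'' < 0 := by
  have hsplit : (δ + 2 * H * L) * H' ^ 2 + (δ ^ 2 + 2 * δ * H * L + H ^ 2 * L ^ 2 + H ^ 2 * L') * H'
      - H * (δ + H * L) * H''
      = (δ + H * L) * H' * (δ + H * L + H') + H * ((H' * L + H * L') * H')
        - H * (δ + H * L) * H'' := by ring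
  have h₁ : (δ + H * L) * H' * (δ + H * L + H') ≤ 0 :=
    mul_nonpos_of_nonpos_of_nonneg (mul_nonpos_of_nonpos_of_nonneg hA hH'.le) hG
  have h₂ : H * ((H' * L + H * L') * H') < 0 := mul_neg_of_neg_of_pos hH (mul_pos hA' hH')
  have h₃ : 0 ≤ H * (δ + H * L) * H'' :=
    mul_nonneg (mul_nonneg_of_nonpos_of_nonpos hH.le hA) hH''
  linarith

noncomputable def freeBoundaryNumerator (h lam : ℝ → ℝ) (δ x : ℝ) : ℝ :=
  (δ + 2 * h x * lam x) * (deriv h x) ^ 2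
    + (δ ^ 2 + 2 * δ * h x * lam x + (h x) ^ 2 * (lam x) ^ 2 + (h x) ^ 2 * deriv lam x) * deriv h x
    - h x * (δ + h x * lam x) * deriv (deriv h) x

section FreeBoundary

variable {h lam : ℝ → ℝ} {δ : ℝ}

lemma continuous_freeBoundaryNumerator (hh : ContDiff ℝ 2 h) (hlam : ContDiff ℝ 1 lam) :
    Continuous (freeBoundaryNumerator h lam δ) := by
  have := hh.continuous
  have := hh.continuous_deriv one_le_two
  have := hh.deriv'.continuous_deriv_one
  have := hlam.continuous
  have := hlam.continuous_deriv_one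
  unfold freeBoundaryNumerator
  fun_prop

lemma freeBoundaryNumerator_neg_s5 {y₀ x : ℝ} (hh : Differentiable ℝ h) (hlam : Differentiable ℝ lam)
    (hh' : ∀ y, 0 < deriv h y) (hh'' : ∀ y, 0 ≤ deriv (deriv h) y) (hlampos : ∀ y, 0 < lam y)
    (hhlam' : ∀ y, 0 < deriv (fun z => h z * lam z) y) (hδ : 0 < δ)
    (hy₀ : h y₀ * lam y₀ + δ = 0) (hx : x ≤ y₀) (hgx : 0 ≤ δ + h x * lam x + deriv h x) :
    freeBoundaryNumerator h lam δ x < 0 := by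
  have hhy₀ : h y₀ < 0 := by nlinarith [hlampos y₀]
  have hA : h x * lam x ≤ h y₀ * lam y₀ := (strictMono_of_deriv_pos hhlam').monotone hx
  have hA' : 0 < deriv h x * lam x + h x * deriv lam x := by
    have hprod : deriv (fun z => h z * lam z) x = deriv h x * lam x + h x * deriv lam x :=
      deriv_mul (hh x) (hlam x)
    exact hprod ▸ hhlam' x
  have hhx : h x < 0 := ((strictMono_of_deriv_pos hh').monotone hx).trans_lt hhy₀
  exact numerator_neg_of_signs hhx (hh' x) (hh'' x) (by linarith) hgx hA'

lemma strictMono_const_add_mul_add_deriv (hh : ContDiff ℝ 2 h) (hlam : Differentiable ℝ lam)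
    (hh'' : ∀ y, 0 ≤ deriv (deriv h) y) (hhlam' : ∀ y, 0 < deriv (fun z => h z * lam z) y) :
    StrictMono (fun x => δ + h x * lam x + deriv h x) := by
  have hA : Differentiable ℝ (fun z => h z * lam z) := (hh.differentiable two_ne_zero).mul hlam
  have hh' : Differentiable ℝ (deriv h) := hh.deriv'.differentiable one_ne_zero
  refine strictMono_of_deriv_pos fun x => ?_
  have hd : HasDerivAt (fun x => δ + h x * lam x + deriv h x) _ x :=
    ((hA x).hasDerivAt.const_add δ).add (hh' x).hasDerivAt
  rw [hd.deriv]
  exact add_pos_of_pos_of_nonneg (hhlam' x) (hh'' x)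

end FreeBoundary

theorem stmt5_general (h lam : ℝ → ℝ) (δ y₀ yInf : ℝ)
    (hC2 : ContDiff ℝ 2 h)
    (hh' : ∀ y, 0 < deriv h y)
    (hh'' : ∀ y, 0 ≤ deriv (deriv h) y)
    (hlamC1 : ContDiff ℝ 1 lam) (hlampos : ∀ y, 0 < lam y)
    (hhlam' : ∀ y, 0 < deriv (fun z => h z * lam z) y)
    (hδ : 0 < δ)
    (hyInflt : yInf < y₀)
    (hy₀ : h y₀ * lam y₀ + δ = 0)
    (hyInf : h yInf * lam yInf + deriv h yInf + δ = 0)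
    (θ : ℝ → ℝ)
    (hθ : ∀ y ∈ Set.Ioc yInf y₀, θ y =
      -∫ x in y..y₀,
        ((δ + 2 * h x * lam x) * (deriv h x) ^ 2
          + (δ ^ 2 + 2 * δ * h x * lam x + (h x) ^ 2 * (lam x) ^ 2
              + (h x) ^ 2 * deriv lam x) * deriv h x
          - h x * (δ + h x * lam x) * deriv (deriv h) x)
        / (δ * deriv h x * (δ + h x * lam x + deriv h x))) :
    StrictAntiOn θ (Set.Ioc yInf y₀) ∧
    ContDiffOn ℝ 1 θ (Set.Ioc yInf y₀) ∧
    Set.BijOn θ (Set.Ioc yInf y₀) (Set.Ici 0) ∧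
    θ y₀ = 0 ∧
    Tendsto θ (nhdsWithin yInf (Set.Ioi yInf)) atTop := by
  have hh : Differentiable ℝ h := hC2.differentiable two_ne_zero
  have hlam : Differentiable ℝ lam := hlamC1.differentiable one_ne_zero
  set g : ℝ → ℝ := fun x => δ + h x * lam x + deriv h x
  have hgC1 : ContDiff ℝ 1 g :=
    (contDiff_const.add ((hC2.of_le one_le_two).mul hlamC1)).add hC2.deriv'
  have hg_mono : StrictMono g := strictMono_const_add_mul_add_deriv hC2 hlam hh'' hhlam'
  have hg_inf : g yInf = 0 := by simp only [g]; linarith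
  have hg_pos : ∀ x, yInf < x → 0 < g x := fun x hx => hg_inf ▸ hg_mono hx
  set u : ℝ → ℝ := fun x => -freeBoundaryNumerator h lam δ x / (δ * deriv h x)
  have hu_cont : Continuous u := (continuous_freeBoundaryNumerator hC2 hlamC1).neg.div
    (continuous_const.mul (hC2.continuous_deriv one_le_two)) fun x => (mul_pos hδ (hh' x)).ne'
  have hu_pos : ∀ x ∈ Icc yInf y₀, 0 < u x := fun x hx =>
    div_pos (neg_pos.2 (freeBoundaryNumerator_neg_s5 hh hlam hh' hh'' hlampos hhlam' hδ hy₀ hx.2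
      (hg_inf ▸ hg_mono.monotone hx.1))) (mul_pos hδ (hh' x))
  have hθu : EqOn θ (fun y => ∫ x in y..y₀, u x / g x) (Ioc yInf y₀) := fun y hy => by
    rw [hθ y hy, ← integral_neg]
    simp only [u, g, div_div, neg_div]
    rfl
  have hf_cont : ContinuousOn (fun x => u x / g x) (Ioi yInf) :=
    hu_cont.continuousOn.div hgC1.continuous.continuousOn fun x hx => (hg_pos x hx).ne'
  have hanti : StrictAntiOn θ (Ioc yInf y₀) :=
    (strictAntiOn_integral_left (hf_cont.mono Ioc_subset_Ioi_self) fun x hx =>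
      div_pos (hu_pos x (Ioc_subset_Icc_self hx)) (hg_pos x hx.1)).congr hθu.symm
  have hC1 : ContDiffOn ℝ 1 θ (Ioc yInf y₀) :=
    ((contDiffOn_integral_left isOpen_Ioi ordConnected_Ioi hyInflt hf_cont).mono
      Ioc_subset_Ioi_self).congr hθu
  have hθy₀ : θ y₀ = 0 := by simpa using hθu ⟨hyInflt, le_rfl⟩
  obtain ⟨K, hK⟩ := hgC1.locallyLipschitz.locallyLipschitzOn.exists_lipschitzOnWith_of_compact
    (isCompact_Icc (a := yInf) (b := y₀))
  have htend : Tendsto θ (𝓝[>] yInf) atTop :=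
    (tendsto_integral_div_atTop hyInflt hu_cont.continuousOn hu_pos hK hg_inf
      fun x hx => hg_pos x hx.1).congr' (eventuallyEq_of_mem (Ioc_mem_nhdsGT hyInflt) hθu.symm)
  exact ⟨hanti, hC1, bijOn_Ioc_Ici_of_strictAntiOn hyInflt hC1.continuousOn hanti hθy₀ htend,
    hθy₀, htend⟩

/-- The free boundary `θ(y) = -∫_y^{y₀} D(x)/(δ h'(x)(δ+hλ+h')(x)) dx` is a strictly
decreasing `C¹` bijection from `(y_∞, y₀]` onto `[0,∞)` with `θ(y₀)=0` and
`θ(y) → +∞` as `y ↘ y_∞`. -/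
theorem stmt5 (h lam : ℝ → ℝ) (δ y₀ yInf : ℝ)
    (hC2 : ContDiff ℝ 2 h) (hh0 : h 0 = 0)
    (hh' : ∀ y, 0 < deriv h y)
    (hh'' : ∀ y, 0 ≤ deriv (deriv h) y)
    (hlamC1 : ContDiff ℝ 1 lam) (hlampos : ∀ y, 0 < lam y)
    (hhlam' : ∀ y, 0 < deriv (fun z => h z * lam z) y)
    (hδ : 0 < δ)
    (hy₀lt : y₀ < 0) (hyInflt : yInf < y₀)
    (hy₀ : h y₀ * lam y₀ + δ = 0)
    (hyInf : h yInf * lam yInf + deriv h yInf + δ = 0)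
    (θ : ℝ → ℝ)
    (hθ : ∀ y ∈ Set.Ioc yInf y₀, θ y =
      -∫ x in y..y₀,
        ((δ + 2 * h x * lam x) * (deriv h x) ^ 2
          + (δ ^ 2 + 2 * δ * h x * lam x + (h x) ^ 2 * (lam x) ^ 2
              + (h x) ^ 2 * deriv lam x) * deriv h x
          - h x * (δ + h x * lam x) * deriv (deriv h) x)
        / (δ * deriv h x * (δ + h x * lam x + deriv h x))) :
    StrictAntiOn θ (Set.Ioc yInf y₀) ∧
    ContDiffOn ℝ 1 θ (Set.Ioc yInf y₀) ∧
    Set.BijOn θ (Set.Ioc yInf y₀) (Set.Ici 0) ∧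
    θ y₀ = 0 ∧
    Tendsto θ (nhdsWithin yInf (Set.Ioi yInf)) atTop :=
  stmt5_general h lam δ y₀ yInf hC2 hh' hh'' hlamC1 hlampos hhlam' hδ hyInflt hy₀ hyInf θ hθ
end

section
/- Under the standing assumptions, the denominator δ h'(y) (δ + h(y)λ(y) + h'(y)) in the free-boundary ODE is strictly positive for y ∈ (y_∞, y₀], and the quantity C(y - y_∞) ≥ δ h'(y)(δ + h(y)λ(y) + h'(y)) ≥ 0 holds on (y_∞, y₀] for some finite constant C > 0 (mean value bound), so that θ(y) ≥ (-c/C)(log(y₀ - y_∞) - log(y - y_∞)) for a constant c < 0 bounding the numerator from above. -/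
set_option maxHeartbeats 1000000


open Real intervalIntegral

/-- Positivity of the free-boundary denominator on `(y_∞, y₀]`, a mean-value bound
`δ h'(δ+hλ+h') ≤ C (y - y_∞)`, and the resulting logarithmic lower bound for `θ`. -/
theorem stmt6 (h lam : ℝ → ℝ) (δ y₀ yInf : ℝ)
    (hC2 : ContDiff ℝ 2 h) (hh0 : h 0 = 0)
    (hh' : ∀ y, 0 < deriv h y)
    (hh'' : ∀ y, 0 ≤ deriv (deriv h) y)
    (hlamC1 : ContDiff ℝ 1 lam) (hlampos : ∀ y, 0 < lam y)
    (hhlam' : ∀ y, 0 < deriv (fun z => h z * lam z) y)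
    (hδ : 0 < δ)
    (hy₀lt : y₀ < 0) (hyInflt : yInf < y₀)
    (hy₀ : h y₀ * lam y₀ + δ = 0)
    (hyInf : h yInf * lam yInf + deriv h yInf + δ = 0)
    (θ : ℝ → ℝ)
    (hθ : ∀ y ∈ Set.Ioc yInf y₀, θ y =
      -∫ x in y..y₀,
        ((δ + 2 * h x * lam x) * (deriv h x) ^ 2
          + (δ ^ 2 + 2 * δ * h x * lam x + (h x) ^ 2 * (lam x) ^ 2
              + (h x) ^ 2 * deriv lam x) * deriv h x
          - h x * (δ + h x * lam x) * deriv (deriv h) x)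
        / (δ * deriv h x * (δ + h x * lam x + deriv h x))) :
    (∀ y ∈ Set.Ioc yInf y₀, 0 < δ * deriv h y * (δ + h y * lam y + deriv h y)) ∧
    ∃ C > (0:ℝ), ∃ c < (0:ℝ),
      (∀ y ∈ Set.Ioc yInf y₀,
        0 ≤ δ * deriv h y * (δ + h y * lam y + deriv h y) ∧
        δ * deriv h y * (δ + h y * lam y + deriv h y) ≤ C * (y - yInf) ∧
        ((δ + 2 * h y * lam y) * (deriv h y) ^ 2
          + (δ ^ 2 + 2 * δ * h y * lam y + (h y) ^ 2 * (lam y) ^ 2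
              + (h y) ^ 2 * deriv lam y) * deriv h y
          - h y * (δ + h y * lam y) * deriv (deriv h) y) ≤ c) ∧
      (∀ y ∈ Set.Ioc yInf y₀,
        θ y ≥ (-c / C) * (Real.log (y₀ - yInf) - Real.log (y - yInf))) := by
  -- basic differentiability / continuity facts
  have hC2' : ContDiff ℝ (1+1) h := by exact_mod_cast hC2
  have hdiff : Differentiable ℝ h := (contDiff_succ_iff_deriv.mp hC2').1
  have hd1 : ContDiff ℝ 1 (deriv h) := (contDiff_succ_iff_deriv.mp hC2').2.2
  have hd1diff : Differentiable ℝ (deriv h) := (contDiff_one_iff_deriv.mp hd1).1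
  have hd2cont : Continuous (deriv (deriv h)) := (contDiff_one_iff_deriv.mp hd1).2
  have hd1cont : Continuous (deriv h) := hd1.continuous
  have hcont : Continuous h := hdiff.continuous
  have lamdiff : Differentiable ℝ lam := (contDiff_one_iff_deriv.mp hlamC1).1
  have lamdcont : Continuous (deriv lam) := (contDiff_one_iff_deriv.mp hlamC1).2
  have lamcont : Continuous lam := lamdiff.continuous
  have hldiff : Differentiable ℝ (fun z => h z * lam z) := hdiff.mul lamdiff
  have hlcont : Continuous (fun z => deriv (fun z => h z * lam z) z) := by
    have : (fun z => deriv (fun z => h z * lam z) z)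
        = fun z => deriv h z * lam z + h z * deriv lam z := by
      funext z
      exact deriv_mul (hdiff z) (lamdiff z)
    rw [this]
    exact ((hd1cont.mul lamcont).add (hcont.mul lamdcont))
  -- the auxiliary function g
  set g : ℝ → ℝ := fun y => h y * lam y + deriv h y + δ with hg
  have gdiff : Differentiable ℝ g := (hldiff.add hd1diff).add_const δ
  have gderiv : ∀ y, deriv g y = deriv (fun z => h z * lam z) y + deriv (deriv h) y := by
    intro y
    rw [hg]
    rw [deriv_add_const]
    exact deriv_add (hldiff y) (hd1diff y)
  have gderivpos : ∀ y, 0 < deriv g y := by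
    intro y; rw [gderiv y]; exact add_pos_of_pos_of_nonneg (hhlam' y) (hh'' y)
  have gmono : StrictMono g := strictMono_of_deriv_pos gderivpos
  have gInf : g yInf = 0 := hyInf
  have gpos : ∀ y ∈ Set.Ioc yInf y₀, 0 < g y := by
    intro y hy
    rw [← gInf]; exact gmono hy.1
  have gnonneg : ∀ y ∈ Set.Icc yInf y₀, 0 ≤ g y := by
    intro y hy
    rw [← gInf]; exact (gmono.monotone hy.1).trans_eq rfl
  -- h strictly monotone and negative
  have hmono : StrictMono h := strictMono_of_deriv_pos hh'
  have hneg : ∀ y ∈ Set.Icc yInf y₀, h y < 0 := by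
    intro y hy
    calc h y ≤ h y₀ := hmono.monotone hy.2
    _ < h 0 := hmono hy₀lt
    _ = 0 := hh0
  -- hλ monotone
  have hlmono : StrictMono (fun z => h z * lam z) := strictMono_of_deriv_pos hhlam'
  have hlle : ∀ y ∈ Set.Icc yInf y₀, h y * lam y ≤ -δ := by
    intro y hy
    have : h y * lam y ≤ h y₀ * lam y₀ := hlmono.monotone hy.2
    linarith
  -- numerator
  set N : ℝ → ℝ := fun y =>
    (δ + 2 * h y * lam y) * (deriv h y) ^ 2
      + (δ ^ 2 + 2 * δ * h y * lam y + (h y) ^ 2 * (lam y) ^ 2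
          + (h y) ^ 2 * deriv lam y) * deriv h y
      - h y * (δ + h y * lam y) * deriv (deriv h) y with hN
  have Ncont : Continuous N := by
    rw [hN]
    exact (((continuous_const.add ((continuous_const.mul hcont).mul lamcont)).mul
        (hd1cont.pow 2)).add
      (((((continuous_const.add (((continuous_const.mul continuous_const).mul hcont).mul lamcont)).add
        ((hcont.pow 2).mul (lamcont.pow 2))).add
        ((hcont.pow 2).mul lamdcont)).mul hd1cont))).sub
      (((hcont.mul (continuous_const.add (hcont.mul lamcont)))).mul hd2cont)
  have Nneg : ∀ y ∈ Set.Icc yInf y₀, N y < 0 := by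
    intro y hy
    have ha : h y < 0 := hneg y hy
    have hl : 0 < lam y := hlampos y
    have hp : 0 < deriv h y := hh' y
    have hq : 0 ≤ deriv (deriv h) y := hh'' y
    have hal : h y * lam y ≤ -δ := hlle y hy
    have hgy : 0 ≤ h y * lam y + deriv h y + δ := gnonneg y hy
    -- key: h² λ' < -h h' λ
    have hkey : (h y)^2 * deriv lam y < -(h y) * deriv h y * lam y := by
      have hd : deriv (fun z => h z * lam z) y = deriv h y * lam y + h y * deriv lam y :=
        deriv_mul (hdiff y) (lamdiff y)
      have h1 : 0 < deriv h y * lam y + h y * deriv lam y := hd ▸ hhlam' y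
      nlinarith
    have hB : 0 ≤ deriv h y * (h y * lam y + deriv h y + δ) := mul_nonneg hp.le hgy
    have hA : 0 ≤ -(δ + h y * lam y) := by linarith
    have hC0 : 0 ≤ -(h y) * deriv (deriv h) y := mul_nonneg (by linarith) hq
    have hAB := mul_nonneg hA hB
    have hAC := mul_nonneg hA hC0
    simp only [hN]
    nlinarith [mul_pos hp hp, mul_lt_mul_of_pos_right hkey hp]
  -- get c from compactness
  obtain ⟨x₀, hx₀m, hx₀max⟩ := isCompact_Icc.exists_isMaxOn
    (Set.nonempty_Icc.mpr hyInflt.le) Ncont.continuousOn (f := N)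
  set c : ℝ := N x₀ with hc
  have hclt : c < 0 := Nneg x₀ hx₀m
  have hNle : ∀ y ∈ Set.Icc yInf y₀, N y ≤ c := fun y hy => hx₀max hy
  -- get C
  obtain ⟨xM, hxMm, hxMmax⟩ := isCompact_Icc.exists_isMaxOn
    (Set.nonempty_Icc.mpr hyInflt.le) ((continuous_const.mul hd1cont).continuousOn)
    (f := fun y => δ * deriv h y)
  set M : ℝ := δ * deriv h xM with hM
  have hMpos : 0 < M := mul_pos hδ (hh' xM)
  obtain ⟨xK, hxKm, hxKmax⟩ := isCompact_Icc.exists_isMaxOn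
    (Set.nonempty_Icc.mpr hyInflt.le) ((hlcont.add hd2cont).continuousOn)
    (f := fun y => deriv (fun z => h z * lam z) y + deriv (deriv h) y)
  set K : ℝ := deriv (fun z => h z * lam z) xK + deriv (deriv h) xK with hK
  have hKpos : 0 < K := add_pos_of_pos_of_nonneg (hhlam' xK) (hh'' xK)
  set C : ℝ := M * K with hCdef
  have hCpos : 0 < C := mul_pos hMpos hKpos
  -- the denominator D
  have Dpos : ∀ y ∈ Set.Ioc yInf y₀, 0 < δ * deriv h y * (δ + h y * lam y + deriv h y) := by
    intro y hy
    have : δ + h y * lam y + deriv h y = g y := by rw [hg]; ring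
    rw [this]
    exact mul_pos (mul_pos hδ (hh' y)) (gpos y hy)
  have Dcont : Continuous (fun y => δ * deriv h y * (δ + h y * lam y + deriv h y)) := by
    continuity
  -- mean value bound: g y ≤ K (y - yInf) on Ioc
  have gbound : ∀ y ∈ Set.Ioc yInf y₀, g y ≤ K * (y - yInf) := by
    intro y hy
    obtain ⟨ξ, hξm, hξeq⟩ := exists_deriv_eq_slope g hy.1
      (gdiff.continuous.continuousOn) (gdiff.differentiableOn)
    have hξIcc : ξ ∈ Set.Icc yInf y₀ := ⟨hξm.1.le, hξm.2.le.trans hy.2⟩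
    have hKb : deriv g ξ ≤ K := by
      have := hxKmax hξIcc
      rw [gderiv ξ]; exact this
    have hypos : 0 < y - yInf := by linarith [hy.1]
    have : (g y - g yInf) / (y - yInf) ≤ K := hξeq ▸ hKb
    rw [gInf, sub_zero] at this
    calc g y = (g y / (y - yInf)) * (y - yInf) := by field_simp
    _ ≤ K * (y - yInf) := mul_le_mul_of_nonneg_right this hypos.le
  have Dbound : ∀ y ∈ Set.Ioc yInf y₀,
      δ * deriv h y * (δ + h y * lam y + deriv h y) ≤ C * (y - yInf) := by
    intro y hy
    have hyIcc : y ∈ Set.Icc yInf y₀ := ⟨hy.1.le, hy.2⟩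
    have h1 : δ + h y * lam y + deriv h y = g y := by rw [hg]; ring
    rw [h1]
    have h2 : δ * deriv h y ≤ M := hxMmax hyIcc
    have h3 : g y ≤ K * (y - yInf) := gbound y hy
    have h4 : 0 ≤ g y := gnonneg y hyIcc
    have h5 : 0 < δ * deriv h y := mul_pos hδ (hh' y)
    calc δ * deriv h y * g y ≤ M * g y := mul_le_mul_of_nonneg_right h2 h4
    _ ≤ M * (K * (y - yInf)) := mul_le_mul_of_nonneg_left h3 hMpos.le
    _ = C * (y - yInf) := by rw [hCdef]; ring
  refine ⟨Dpos, C, hCpos, c, hclt, ?_, ?_⟩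
  · intro y hy
    exact ⟨(Dpos y hy).le, Dbound y hy, hNle y ⟨hy.1.le, hy.2⟩⟩
  · -- the integral estimate
    intro y hy
    have hyy₀ : y ≤ y₀ := hy.2
    have hypos : 0 < y - yInf := by linarith [hy.1]
    have hy₀pos : 0 < y₀ - yInf := by linarith
    set D : ℝ → ℝ := fun x => δ * deriv h x * (δ + h x * lam x + deriv h x) with hD
    have hsub : Set.Icc y y₀ ⊆ Set.Ioc yInf y₀ := fun x hx => ⟨lt_of_lt_of_le hy.1 hx.1, hx.2⟩
    have hDne : ∀ x ∈ Set.uIcc y y₀, D x ≠ 0 := by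
      intro x hx
      rw [Set.uIcc_of_le hyy₀] at hx
      exact (Dpos x (hsub hx)).ne'
    have hFint : IntervalIntegrable (fun x => N x / D x) MeasureTheory.volume y y₀ := by
      apply ContinuousOn.intervalIntegrable
      exact Ncont.continuousOn.div Dcont.continuousOn hDne
    have hGne : ∀ x ∈ Set.uIcc y y₀, C * (x - yInf) ≠ 0 := by
      intro x hx
      rw [Set.uIcc_of_le hyy₀] at hx
      have hxp : 0 < x - yInf := by
        have := lt_of_lt_of_le hy.1 hx.1; linarith
      exact (mul_pos hCpos hxp).ne'
    have hGint : IntervalIntegrable (fun x => c / (C * (x - yInf))) MeasureTheory.volume y y₀ := by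
      apply ContinuousOn.intervalIntegrable
      exact continuousOn_const.div
        (continuous_const.mul (continuous_id.sub continuous_const)).continuousOn hGne
    have hmonoI : ∫ x in y..y₀, N x / D x ≤ ∫ x in y..y₀, c / (C * (x - yInf)) := by
      apply intervalIntegral.integral_mono_on hyy₀ hFint hGint
      intro x hx
      have hxm : x ∈ Set.Ioc yInf y₀ := hsub hx
      have hDx : 0 < D x := Dpos x hxm
      have hxpos : 0 < x - yInf := by linarith [hxm.1]
      have hCx : 0 < C * (x - yInf) := by positivity
      have h1 : N x / D x ≤ c / D x :=
        div_le_div_of_nonneg_right (hNle x ⟨hxm.1.le, hxm.2⟩) hDx.le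
      have h2 : c / D x ≤ c / (C * (x - yInf)) := by
        have hle : 1 / (C * (x - yInf)) ≤ 1 / D x :=
          one_div_le_one_div_of_le hDx (Dbound x hxm)
        have := mul_le_mul_of_nonpos_left hle hclt.le
        rw [mul_one_div, mul_one_div] at this
        exact this
      exact h1.trans h2
    have hGval : ∫ x in y..y₀, c / (C * (x - yInf))
        = (c / C) * (Real.log (y₀ - yInf) - Real.log (y - yInf)) := by
      have heq : ∀ x : ℝ, c / (C * (x - yInf)) = (c/C) * (x - yInf)⁻¹ := by
        intro x
        rw [div_mul_eq_div_div, div_eq_mul_inv]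
      simp only [heq]
      rw [intervalIntegral.integral_const_mul]
      have hcomp : (∫ x in y..y₀, (x - yInf)⁻¹) = ∫ x in (y - yInf)..(y₀ - yInf), x⁻¹ :=
        intervalIntegral.integral_comp_sub_right (fun x => x⁻¹) yInf
      rw [hcomp, integral_inv]
      · rw [Real.log_div hy₀pos.ne' hypos.ne']
      · rw [Set.uIcc_of_le (by linarith : y - yInf ≤ y₀ - yInf)]
        intro hmem
        exact absurd hmem.1 (by linarith)
    rw [hθ y hy]
    have hθval : -(∫ x in y..y₀, N x / D x) ≥ -((c / C) * (Real.log (y₀ - yInf) - Real.log (y - yInf))) := by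
      exact neg_le_neg (hGval ▸ hmonoI)
    calc (-c / C) * (Real.log (y₀ - yInf) - Real.log (y - yInf))
        = -((c / C) * (Real.log (y₀ - yInf) - Real.log (y - yInf))) := by ring
    _ ≤ -(∫ x in y..y₀, N x / D x) := hθval
    _ = -∫ x in y..y₀,
        ((δ + 2 * h x * lam x) * (deriv h x) ^ 2
          + (δ ^ 2 + 2 * δ * h x * lam x + (h x) ^ 2 * (lam x) ^ 2
              + (h x) ^ 2 * deriv lam x) * deriv h x
          - h x * (δ + h x * lam x) * deriv (deriv h) x)
        / (δ * deriv h x * (δ + h x * lam x + deriv h x)) := by rw [hN, hD]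
end

section
/- Let θ : (y_∞, y₀] → [0,∞) be the free boundary with inverse y(·), and define the time-to-liquidation τ(y) := -(1/δ) log( (f(y)/f(y₀)) · (h(y)λ(y) + h'(y) + δ)/h'(y) ). Then under the standing assumptions, the function y ↦ f(y)·(h(y)λ(y) + h'(y) + δ)/h'(y) is strictly increasing on (y_∞, y₀], hence τ is strictly decreasing there with τ(y₀) = 0 and τ(y) → +∞ as y ↘ y_∞. -/
/-!
Write `A = hλ + h' + δ` and `g = f A / h'`. Since `(hλ)' > 0` and `h'' ≥ 0`, `A` is strictly
increasing with `A(y_∞) = 0`, so `A > 0` to the right of `y_∞`; since `hλ + δ` is increasing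
and vanishes at `y₀`, also `A ≤ h'` on `(-∞, y₀]`. Using `f' = λ f`,
`g' h'² / f = λ A h' + (hλ)' h' + h'' (h' - A)`, which is positive on `(y_∞, y₀]`.
As `τ = -(1/δ) log (g / f(y₀))`, the claims on `τ` follow from `g(y₀) = f(y₀)` and
`g(y) → 0⁺` as `y ↘ y_∞`.
-/

open Real Filter Set Topology intervalIntegral

theorem hasDerivAt_of_eq_exp_integral {f lam : ℝ → ℝ} {a : ℝ} (hlam : Continuous lam)
    (hf : ∀ y, f y = exp (∫ x in a..y, lam x)) (y : ℝ) : HasDerivAt f (f y * lam y) y := by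
  rw [funext hf]
  exact (integral_hasDerivAt_right (hlam.intervalIntegrable _ _)
    (hlam.stronglyMeasurableAtFilter _ _) hlam.continuousAt).exp

theorem deriv_mul_div_pos {f A B : ℝ → ℝ} {y l c e : ℝ}
    (hf : HasDerivAt f (f y * l) y) (hA : HasDerivAt A (c + e) y) (hB : HasDerivAt B e y)
    (hfy : 0 < f y) (hl : 0 ≤ l) (hAy : 0 ≤ A y) (hAB : A y ≤ B y) (hBy : 0 < B y)
    (hc : 0 < c) (he : 0 ≤ e) :
    0 < deriv (fun y => f y * A y / B y) y := by
  have hd : HasDerivAt (fun y => f y * A y / B y)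
      (((f y * l * A y + f y * (c + e)) * B y - f y * A y * e) / B y ^ 2) y :=
    (hf.mul hA).div hB hBy.ne'
  rw [hd.deriv]
  have hBA := sub_nonneg.mpr hAB
  calc (0 : ℝ) < f y * (l * A y * B y + c * B y + e * (B y - A y)) / B y ^ 2 := by positivity
    _ = _ := by ring

theorem StrictMonoOn.const_mul_log_of_neg {g : ℝ → ℝ} {s : Set ℝ} {c : ℝ} (hc : c < 0)
    (hg : StrictMonoOn g s) (hpos : ∀ x ∈ s, 0 < g x) :
    StrictAntiOn (fun x => c * log (g x)) s := fun _ ha _ hb hab =>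
  mul_lt_mul_of_neg_left (log_lt_log (hpos _ ha) (hg ha hb hab)) hc

theorem Filter.Tendsto.const_mul_log_atTop_of_neg {α : Type*} {l : Filter α} {u : α → ℝ}
    {c : ℝ} (hc : c < 0) (hu : Tendsto u l (𝓝[>] 0)) :
    Tendsto (fun x => c * Real.log (u x)) l atTop :=
  (tendsto_log_nhdsGT_zero.comp hu).const_mul_atBot_of_neg hc

section Liquidation

variable {h lam f : ℝ → ℝ}

theorem strictMono_mul_add_deriv_add (hC2 : ContDiff ℝ 2 h)
    (hh'' : ∀ y, 0 ≤ deriv (deriv h) y) (hhlam' : ∀ y, 0 < deriv (fun z => h z * lam z) y)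
    (δ : ℝ) : StrictMono (fun y => h y * lam y + deriv h y + δ) :=
  ((strictMono_of_deriv_pos hhlam').add_monotone
    (monotone_of_deriv_nonneg hC2.differentiable_deriv_two hh'')).add_const δ

theorem hasDerivAt_mul_add_deriv_add (hC2 : ContDiff ℝ 2 h)
    (hhlam' : ∀ y, 0 < deriv (fun z => h z * lam z) y) (δ y : ℝ) :
    HasDerivAt (fun y => h y * lam y + deriv h y + δ)
      (deriv (fun z => h z * lam z) y + deriv (deriv h) y) y :=
  (((differentiableAt_of_deriv_ne_zero (hhlam' y).ne').hasDerivAt.add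
    (hC2.differentiable_deriv_two y).hasDerivAt).add_const δ)

theorem mul_add_deriv_add_le_deriv {δ y₀ y : ℝ}
    (hhlam' : ∀ y, 0 < deriv (fun z => h z * lam z) y) (hy₀ : h y₀ * lam y₀ + δ = 0)
    (hy : y ≤ y₀) : h y * lam y + deriv h y + δ ≤ deriv h y := by
  have := (strictMono_of_deriv_pos hhlam').monotone hy
  linarith

theorem continuous_mul_add_deriv_add_div_deriv {δ : ℝ} (hC2 : ContDiff ℝ 2 h)
    (hh' : ∀ y, 0 < deriv h y) (hhlam' : ∀ y, 0 < deriv (fun z => h z * lam z) y)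
    (hf : ∀ y, HasDerivAt f (f y * lam y) y) :
    Continuous (fun y => f y * (h y * lam y + deriv h y + δ) / deriv h y) :=
  Differentiable.continuous fun y =>
    ((hf y).differentiableAt.mul (hasDerivAt_mul_add_deriv_add hC2 hhlam' δ y).differentiableAt
      ).div (hC2.differentiable_deriv_two y) (hh' y).ne'

theorem strictMonoOn_mul_add_deriv_add_div_deriv {δ y₀ yInf : ℝ} (hC2 : ContDiff ℝ 2 h)
    (hh' : ∀ y, 0 < deriv h y) (hh'' : ∀ y, 0 ≤ deriv (deriv h) y)
    (hlampos : ∀ y, 0 < lam y) (hhlam' : ∀ y, 0 < deriv (fun z => h z * lam z) y)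
    (hy₀ : h y₀ * lam y₀ + δ = 0) (hyInf : h yInf * lam yInf + deriv h yInf + δ = 0)
    (hf : ∀ y, HasDerivAt f (f y * lam y) y) (hfpos : ∀ y, 0 < f y) :
    StrictMonoOn (fun y => f y * (h y * lam y + deriv h y + δ) / deriv h y) (Ioc yInf y₀) := by
  refine strictMonoOn_of_deriv_pos (convex_Ioc _ _)
    (continuous_mul_add_deriv_add_div_deriv hC2 hh' hhlam' hf).continuousOn fun y hy => ?_
  rw [interior_Ioc] at hy
  have hA : 0 < h y * lam y + deriv h y + δ :=
    hyInf ▸ strictMono_mul_add_deriv_add hC2 hh'' hhlam' δ hy.1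
  exact deriv_mul_div_pos (hf y) (hasDerivAt_mul_add_deriv_add hC2 hhlam' δ y)
    (hC2.differentiable_deriv_two y).hasDerivAt (hfpos y) (hlampos y).le hA.le
    (mul_add_deriv_add_le_deriv hhlam' hy₀ hy.2.le) (hh' y) (hhlam' y) (hh'' y)

end Liquidation

theorem stmt7_general (h lam : ℝ → ℝ) (δ y₀ yInf : ℝ)
    (hC2 : ContDiff ℝ 2 h)
    (hh' : ∀ y, 0 < deriv h y)
    (hh'' : ∀ y, 0 ≤ deriv (deriv h) y)
    (hlamC1 : ContDiff ℝ 1 lam) (hlampos : ∀ y, 0 < lam y)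
    (hhlam' : ∀ y, 0 < deriv (fun z => h z * lam z) y)
    (hδ : 0 < δ)
    (hy₀ : h y₀ * lam y₀ + δ = 0)
    (hyInf : h yInf * lam yInf + deriv h yInf + δ = 0)
    (f τ : ℝ → ℝ)
    (hf : ∀ y, f y = Real.exp (∫ x in (0:ℝ)..y, lam x))
    (hτ : ∀ y, τ y = -(1 / δ) *
      Real.log ((f y / f y₀) * (h y * lam y + deriv h y + δ) / deriv h y)) :
    StrictMonoOn (fun y => f y * (h y * lam y + deriv h y + δ) / deriv h y)
      (Set.Ioc yInf y₀) ∧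
    StrictAntiOn τ (Set.Ioc yInf y₀) ∧
    τ y₀ = 0 ∧
    Tendsto τ (nhdsWithin yInf (Set.Ioi yInf)) atTop := by
  have hf' := hasDerivAt_of_eq_exp_integral hlamC1.continuous hf
  have hfpos : ∀ y, 0 < f y := fun y => hf y ▸ exp_pos _
  set g := fun y => f y * (h y * lam y + deriv h y + δ) / deriv h y
  have hg_mono : StrictMonoOn g (Ioc yInf y₀) :=
    strictMonoOn_mul_add_deriv_add_div_deriv hC2 hh' hh'' hlampos hhlam' hy₀ hyInf hf' hfpos
  have hg_pos : ∀ y ∈ Ioi yInf, 0 < g y / f y₀ := fun y hy => by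
    have := strictMono_mul_add_deriv_add hC2 hh'' hhlam' δ hy
    exact div_pos (div_pos (mul_pos (hfpos y) (hyInf ▸ this)) (hh' y)) (hfpos y₀)
  have hτg : τ = fun y => -(1 / δ) * log (g y / f y₀) := funext fun y => by
    rw [hτ]
    congr 2
    ring
  have hc : -(1 / δ) < 0 := neg_neg_of_pos (one_div_pos.mpr hδ)
  refine ⟨hg_mono, hτg ▸ ?_, ?_, hτg ▸ ?_⟩
  · exact StrictMonoOn.const_mul_log_of_neg hc
      (fun a ha b hb hab => div_lt_div_of_pos_right (hg_mono ha hb hab) (hfpos y₀))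
      fun y hy => hg_pos y hy.1
  · have hA : h y₀ * lam y₀ + deriv h y₀ + δ = deriv h y₀ := by linarith
    rw [hτ, hA, div_self (hfpos y₀).ne', one_mul, div_self (hh' y₀).ne', log_one, mul_zero]
  · have hg_lim : Tendsto (fun y => g y / f y₀) (𝓝[>] yInf) (𝓝 0) := by
      have hgInf : g yInf / f y₀ = 0 := by simp only [g, hyInf, mul_zero, zero_div]
      have hg_cont := continuous_mul_add_deriv_add_div_deriv (δ := δ) hC2 hh' hhlam' hf'
      exact hgInf ▸ ((hg_cont.div_const _).tendsto yInf).mono_left nhdsWithin_le_nhds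
    exact Tendsto.const_mul_log_atTop_of_neg hc
      (tendsto_nhdsWithin_of_tendsto_nhds_of_eventually_within _ hg_lim
        (eventually_nhdsWithin_of_forall hg_pos))

/-- The map `y ↦ f(y)(hλ+h'+δ)(y)/h'(y)` is strictly increasing on `(y_∞, y₀]`, so the
time-to-liquidation `τ(y) = -(1/δ) log((f(y)/f(y₀))·(hλ+h'+δ)(y)/h'(y))` is strictly
decreasing there, with `τ(y₀) = 0` and `τ(y) → +∞` as `y ↘ y_∞`. -/
theorem stmt7 (h lam : ℝ → ℝ) (δ y₀ yInf : ℝ)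
    (hC2 : ContDiff ℝ 2 h) (hh0 : h 0 = 0)
    (hh' : ∀ y, 0 < deriv h y)
    (hh'' : ∀ y, 0 ≤ deriv (deriv h) y)
    (hlamC1 : ContDiff ℝ 1 lam) (hlampos : ∀ y, 0 < lam y)
    (hhlam' : ∀ y, 0 < deriv (fun z => h z * lam z) y)
    (hδ : 0 < δ)
    (hy₀lt : y₀ < 0) (hyInflt : yInf < y₀)
    (hy₀ : h y₀ * lam y₀ + δ = 0)
    (hyInf : h yInf * lam yInf + deriv h yInf + δ = 0)
    (f τ : ℝ → ℝ)
    (hf : ∀ y, f y = Real.exp (∫ x in (0:ℝ)..y, lam x))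
    (hτ : ∀ y, τ y = -(1 / δ) *
      Real.log ((f y / f y₀) * (h y * lam y + deriv h y + δ) / deriv h y)) :
    StrictMonoOn (fun y => f y * (h y * lam y + deriv h y + δ) / deriv h y)
      (Set.Ioc yInf y₀) ∧
    StrictAntiOn τ (Set.Ioc yInf y₀) ∧
    τ y₀ = 0 ∧
    Tendsto τ (nhdsWithin yInf (Set.Ioi yInf)) atTop :=
  stmt7_general h lam δ y₀ yInf hC2 hh' hh'' hlamC1 hlampos hhlam' hδ hy₀ hyInf f τ hf hτ
end

section
/- Under the standing assumptions, for each θ ≥ 0 the identity ∫_0^θ (h'/(hλ + h' + δ))(y(x)) dx = (h·(hλ + δ))/(δ·(hλ + h' + δ)) evaluated at y(θ) holds, where y : [0,∞) → (y_∞, y₀] is the inverse of the free boundary θ(·) defined by θ'(y) = 1 + hλ/δ - h h''/(δ h') + h (hλ+h'+δ)'/(δ(hλ+h'+δ)) with θ(y₀)=0. -/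
/-!
Write `Q = hλ + δ`, `P = hλ + h' + δ` and `F = hQ/(δP)`, the right-hand side. The quotient rule
gives `F' = (h'/P) θ'` (with `θ'` read off the ODE), and on `(y_∞, y₀]`, where `h < 0` and
`Q ≤ 0 < P`, one checks `F' < 0`; hence `θ' < 0`, `θ` is strictly decreasing there and `y` is its
inverse. The substitution `x = θ(y)` turns the integral into `∫_{y(θ)}^{y₀} -F'`, that is
`F(y(θ)) - F(y₀) = F(y(θ))`, because `Q(y₀) = 0`.
-/

open intervalIntegral MeasureTheory Set

theorem strictAntiOn_of_hasDerivAt_neg {D : Set ℝ} (hD : Convex ℝ D) {f f' : ℝ → ℝ}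
    (hf : ∀ x ∈ D, HasDerivAt f (f' x) x) (hf' : ∀ x ∈ D, f' x < 0) : StrictAntiOn f D :=
  strictAntiOn_of_deriv_neg hD (fun x hx => (hf x hx).continuousAt.continuousWithinAt)
    fun x hx => (hf x (interior_subset hx)).deriv ▸ hf' x (interior_subset hx)

theorem integral_eq_sub_of_hasDerivAt_of_nonneg {f f' : ℝ → ℝ} {a b : ℝ} (hab : a ≤ b)
    (hf : ∀ x ∈ Icc a b, HasDerivAt f (f' x) x) (hf' : ∀ x ∈ Ioo a b, 0 ≤ f' x) :
    ∫ x in a..b, f' x = f b - f a :=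
  have hcont : ContinuousOn f (Icc a b) := HasDerivAt.continuousOn hf
  have hderiv : ∀ x ∈ Ioo a b, HasDerivAt f (f' x) x := fun x hx => hf x (Ioo_subset_Icc_self hx)
  integral_eq_sub_of_hasDerivAt_of_le hab hcont hderiv <|
    (intervalIntegrable_iff_integrableOn_Ioc_of_le hab).2 <|
      integrableOn_deriv_of_nonneg hcont hderiv hf'

theorem integral_comp_of_leftInvOn_of_deriv_nonpos {E : Type*} [NormedAddCommGroup E]
    [NormedSpace ℝ E] {f f' u : ℝ → ℝ} {a b : ℝ} (g : ℝ → E) (hab : a ≤ b) (hfab : f b ≤ f a)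
    (hf : ContinuousOn f (Icc a b)) (hff' : ∀ x ∈ Ioo a b, HasDerivAt f (f' x) x)
    (hf' : ∀ x ∈ Ioo a b, f' x ≤ 0) (hu : LeftInvOn u f (Icc a b)) :
    ∫ t in f b..f a, g (u t) = ∫ x in a..b, -(f' x • g x) := by
  have hsubst := integral_Icc_deriv_smul_of_deriv_nonpos (g := g ∘ u) hf hff' hf' hab
  rw [setIntegral_congr_fun measurableSet_Icc fun x hx => by rw [Function.comp_apply, hu hx]]
    at hsubst
  rw [integral_of_le hfab, integral_of_le hab, ← integral_Icc_eq_integral_Ioc,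
    ← integral_Icc_eq_integral_Ioc, MeasureTheory.integral_neg, hsubst, neg_neg]
  rfl

namespace FreeBoundary

variable (h lam : ℝ → ℝ) (δ : ℝ)

noncomputable def value (y : ℝ) : ℝ :=
  h y * (h y * lam y + δ) / (δ * (h y * lam y + deriv h y + δ))

noncomputable def density (y : ℝ) : ℝ :=
  deriv h y / (h y * lam y + deriv h y + δ)

noncomputable def boundaryDeriv (y : ℝ) : ℝ :=
  1 + h y * lam y / δ - h y * deriv (deriv h) y / (δ * deriv h y)
    + h y * deriv (fun z => h z * lam z + deriv h z + δ) y
      / (δ * (h y * lam y + deriv h y + δ))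

variable {h lam δ}

-- The numerator is `δ P² F'` expanded as `h'QP + h(Q'h' - Qh'')`, a form whose sign is visible.
theorem boundaryDeriv_mul_density {y : ℝ} (hhlam : DifferentiableAt ℝ (fun z => h z * lam z) y)
    (hh' : DifferentiableAt ℝ (deriv h) y) (hδ : δ ≠ 0) (hh'0 : deriv h y ≠ 0)
    (hP : h y * lam y + deriv h y + δ ≠ 0) :
    boundaryDeriv h lam δ y * density h lam δ y
      = (deriv h y * (h y * lam y + δ) * (h y * lam y + deriv h y + δ)
          + h y * (deriv (fun z => h z * lam z) y * deriv h y
            - (h y * lam y + δ) * deriv (deriv h) y))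
        / (δ * (h y * lam y + deriv h y + δ) ^ 2) := by
  have hP' : deriv (fun z => h z * lam z + deriv h z + δ) y
      = deriv (fun z => h z * lam z) y + deriv (deriv h) y :=
    ((hhlam.hasDerivAt.add hh'.hasDerivAt).add_const δ).deriv
  rw [boundaryDeriv, density, hP']
  field_simp
  ring

theorem hasDerivAt_value {y : ℝ} (hh : DifferentiableAt ℝ h y)
    (hhlam : DifferentiableAt ℝ (fun z => h z * lam z) y)
    (hh' : DifferentiableAt ℝ (deriv h) y) (hδ : δ ≠ 0) (hh'0 : deriv h y ≠ 0)
    (hP : h y * lam y + deriv h y + δ ≠ 0) :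
    HasDerivAt (value h lam δ) (boundaryDeriv h lam δ y * density h lam δ y) y := by
  have hQ : HasDerivAt (fun z => h z * lam z + δ) (deriv (fun z => h z * lam z) y) y :=
    hhlam.hasDerivAt.add_const δ
  have hP' : HasDerivAt (fun z => h z * lam z + deriv h z + δ)
      (deriv (fun z => h z * lam z) y + deriv (deriv h) y) y :=
    (hhlam.hasDerivAt.add hh'.hasDerivAt).add_const δ
  refine ((hh.hasDerivAt.mul hQ).div (hP'.const_mul δ) (mul_ne_zero hδ hP)).congr_deriv ?_
  rw [boundaryDeriv_mul_density hhlam hh' hδ hh'0 hP, Pi.mul_apply]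
  field_simp
  ring

theorem boundaryDeriv_mul_density_neg {y : ℝ}
    (hhlam : DifferentiableAt ℝ (fun z => h z * lam z) y) (hh' : DifferentiableAt ℝ (deriv h) y)
    (hδ : 0 < δ) (hh'pos : 0 < deriv h y) (hh'' : 0 ≤ deriv (deriv h) y)
    (hhlam' : 0 < deriv (fun z => h z * lam z) y) (hhy : h y < 0) (hQ : h y * lam y + δ ≤ 0)
    (hP : 0 < h y * lam y + deriv h y + δ) :
    boundaryDeriv h lam δ y * density h lam δ y < 0 := by
  rw [boundaryDeriv_mul_density hhlam hh' hδ.ne' hh'pos.ne' hP.ne']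
  refine div_neg_of_neg_of_pos ?_ (by positivity)
  have hQP : deriv h y * (h y * lam y + δ) * (h y * lam y + deriv h y + δ) ≤ 0 :=
    mul_nonpos_of_nonpos_of_nonneg (mul_nonpos_of_nonneg_of_nonpos hh'pos.le hQ) hP.le
  have hhQ : 0 ≤ h y * (h y * lam y + δ) := mul_nonneg_of_nonpos_of_nonpos hhy.le hQ
  nlinarith [mul_neg_of_neg_of_pos hhy (mul_pos hhlam' hh'pos), mul_nonneg hhQ hh'']

theorem mul_add_deriv_add_pos_of_lt (hh' : Differentiable ℝ (deriv h))
    (hhlam : Differentiable ℝ (fun z => h z * lam z)) (hh'' : ∀ y, 0 ≤ deriv (deriv h) y)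
    (hhlam' : ∀ y, 0 < deriv (fun z => h z * lam z) y) {yInf y : ℝ}
    (hyInf : h yInf * lam yInf + deriv h yInf + δ = 0) (hy : yInf < y) :
    0 < h y * lam y + deriv h y + δ :=
  hyInf ▸ strictMono_of_hasDerivAt_pos
    (fun z => ((hhlam z).hasDerivAt.add (hh' z).hasDerivAt).add_const δ)
    (fun z => add_pos_of_pos_of_nonneg (hhlam' z) (hh'' z)) hy

theorem boundaryDeriv_mul_density_neg_of_mem_Ioc (hh : Differentiable ℝ h)
    (hh' : Differentiable ℝ (deriv h)) (hhlam : Differentiable ℝ (fun z => h z * lam z))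
    (hh0 : h 0 = 0) (hh'pos : ∀ y, 0 < deriv h y) (hh'' : ∀ y, 0 ≤ deriv (deriv h) y)
    (hhlam' : ∀ y, 0 < deriv (fun z => h z * lam z) y) (hδ : 0 < δ) {y₀ yInf : ℝ}
    (hy₀lt : y₀ < 0) (hy₀ : h y₀ * lam y₀ + δ = 0)
    (hyInf : h yInf * lam yInf + deriv h yInf + δ = 0) {y : ℝ} (hy : y ∈ Ioc yInf y₀) :
    boundaryDeriv h lam δ y * density h lam δ y < 0 := by
  have hh_mono : StrictMono h := strictMono_of_hasDerivAt_pos (fun z => (hh z).hasDerivAt) hh'pos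
  have hQ_mono : StrictMono (fun z => h z * lam z + δ) :=
    strictMono_of_hasDerivAt_pos (fun z => (hhlam z).hasDerivAt.add_const δ) hhlam'
  refine boundaryDeriv_mul_density_neg (hhlam y) (hh' y) hδ (hh'pos y) (hh'' y) (hhlam' y) ?_
    (hy₀ ▸ hQ_mono.monotone hy.2) (mul_add_deriv_add_pos_of_lt hh' hhlam hh'' hhlam' hyInf hy.1)
  exact (hh_mono.monotone hy.2).trans_lt (hh0 ▸ hh_mono hy₀lt)

theorem boundaryDeriv_neg_of_mem_Ioc (hh : Differentiable ℝ h)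
    (hh' : Differentiable ℝ (deriv h)) (hhlam : Differentiable ℝ (fun z => h z * lam z))
    (hh0 : h 0 = 0) (hh'pos : ∀ y, 0 < deriv h y) (hh'' : ∀ y, 0 ≤ deriv (deriv h) y)
    (hhlam' : ∀ y, 0 < deriv (fun z => h z * lam z) y) (hδ : 0 < δ) {y₀ yInf : ℝ}
    (hy₀lt : y₀ < 0) (hy₀ : h y₀ * lam y₀ + δ = 0)
    (hyInf : h yInf * lam yInf + deriv h yInf + δ = 0) {y : ℝ} (hy : y ∈ Ioc yInf y₀) :
    boundaryDeriv h lam δ y < 0 :=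
  neg_of_mul_neg_left
    (boundaryDeriv_mul_density_neg_of_mem_Ioc hh hh' hhlam hh0 hh'pos hh'' hhlam' hδ hy₀lt hy₀
      hyInf hy)
    (div_pos (hh'pos y) (mul_add_deriv_add_pos_of_lt hh' hhlam hh'' hhlam' hyInf hy.1)).le

end FreeBoundary

open FreeBoundary

theorem stmt8_general (h lam : ℝ → ℝ) (δ y₀ yInf : ℝ)
    (hC2 : ContDiff ℝ 2 h) (hh0 : h 0 = 0)
    (hh' : ∀ y, 0 < deriv h y)
    (hh'' : ∀ y, 0 ≤ deriv (deriv h) y)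
    (hlamC1 : ContDiff ℝ 1 lam)
    (hhlam' : ∀ y, 0 < deriv (fun z => h z * lam z) y)
    (hδ : 0 < δ)
    (hy₀lt : y₀ < 0)
    (hy₀ : h y₀ * lam y₀ + δ = 0)
    (hyInf : h yInf * lam yInf + deriv h yInf + δ = 0)
    (θfun yb : ℝ → ℝ)
    (hθ0 : θfun y₀ = 0)
    (hθ' : ∀ y ∈ Set.Ioc yInf y₀, HasDerivAt θfun
      (1 + h y * lam y / δ - h y * deriv (deriv h) y / (δ * deriv h y)
        + h y * deriv (fun z => h z * lam z + deriv h z + δ) y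
            / (δ * (h y * lam y + deriv h y + δ))) y)
    (hyb_mem : ∀ t ≥ (0:ℝ), yb t ∈ Set.Ioc yInf y₀)
    (hyb_inv : ∀ t ≥ (0:ℝ), θfun (yb t) = t) :
    ∀ θ ≥ (0:ℝ),
      (∫ x in (0:ℝ)..θ,
          deriv h (yb x) / (h (yb x) * lam (yb x) + deriv h (yb x) + δ))
        = h (yb θ) * (h (yb θ) * lam (yb θ) + δ)
            / (δ * (h (yb θ) * lam (yb θ) + deriv h (yb θ) + δ)) := by
  intro θ hθ
  have hh : Differentiable ℝ h := hC2.differentiable (by norm_num)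
  have hh₂ : Differentiable ℝ (deriv h) := hC2.differentiable_deriv_two
  have hhlam : Differentiable ℝ (fun z => h z * lam z) :=
    hh.mul (hlamC1.differentiable (by norm_num))
  have hsign : ∀ y ∈ Ioc yInf y₀, boundaryDeriv h lam δ y * density h lam δ y < 0 :=
    fun y hy => boundaryDeriv_mul_density_neg_of_mem_Ioc hh hh₂ hhlam hh0 hh' hh'' hhlam' hδ
      hy₀lt hy₀ hyInf hy
  have hθ'_neg : ∀ y ∈ Ioc yInf y₀, boundaryDeriv h lam δ y < 0 := fun y hy =>
    boundaryDeriv_neg_of_mem_Ioc hh hh₂ hhlam hh0 hh' hh'' hhlam' hδ hy₀lt hy₀ hyInf hy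
  have hθ_anti : StrictAntiOn θfun (Ioc yInf y₀) :=
    strictAntiOn_of_hasDerivAt_neg (convex_Ioc _ _) hθ' hθ'_neg
  have hyb_left : LeftInvOn yb θfun (Ioc yInf y₀) :=
    hθ_anti.injOn.rightInvOn_of_leftInvOn (fun t ht => hyb_inv t ht)
      (fun y hy => hθ0 ▸ hθ_anti.antitoneOn hy (right_mem_Ioc.2 (hy.1.trans_le hy.2)) hy.2)
      (fun t ht => hyb_mem t ht)
  obtain ⟨hyInf_lt, hyb_le⟩ := hyb_mem θ hθ
  have hIcc : Icc (yb θ) y₀ ⊆ Ioc yInf y₀ := Icc_subset_Ioc hyInf_lt le_rfl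
  show ∫ x in (0:ℝ)..θ, density h lam δ (yb x) = value h lam δ (yb θ)
  calc ∫ x in (0:ℝ)..θ, density h lam δ (yb x)
      = ∫ t in θfun y₀..θfun (yb θ), density h lam δ (yb t) := by rw [hθ0, hyb_inv θ hθ]
    _ = ∫ y in yb θ..y₀, -(boundaryDeriv h lam δ y * density h lam δ y) :=
        integral_comp_of_leftInvOn_of_deriv_nonpos _ hyb_le (by rwa [hθ0, hyb_inv θ hθ])
          (fun x hx => (hθ' x (hIcc hx)).continuousAt.continuousWithinAt)
          (fun x hx => hθ' x (hIcc (Ioo_subset_Icc_self hx)))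
          (fun x hx => (hθ'_neg x (hIcc (Ioo_subset_Icc_self hx))).le) (hyb_left.mono hIcc)
    _ = value h lam δ (yb θ) - value h lam δ y₀ :=
        (integral_eq_sub_of_hasDerivAt_of_nonneg hyb_le
          (fun x hx => (hasDerivAt_value (hh x) (hhlam x) (hh₂ x) hδ.ne' (hh' x).ne'
            (mul_add_deriv_add_pos_of_lt hh₂ hhlam hh'' hhlam' hyInf (hIcc hx).1).ne').neg)
          (fun x hx => neg_nonneg.2 (hsign x (hIcc (Ioo_subset_Icc_self hx))).le)).trans
          (neg_sub_neg _ _)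
    _ = value h lam δ (yb θ) := by rw [sub_eq_self, value, hy₀, mul_zero, zero_div]

/-- Lemma A.2: with `y(·)` the inverse of the free boundary `θ(·)` (the solution of the
ODE `θ' = 1 + hλ/δ - hh''/(δh') + h(hλ+h'+δ)'/(δ(hλ+h'+δ))`, `θ(y₀) = 0`), one has
`∫_0^θ (h'/(hλ+h'+δ))(y(x)) dx = (h(hλ+δ)/(δ(hλ+h'+δ)))(y(θ))` for all `θ ≥ 0`. -/
theorem stmt8 (h lam : ℝ → ℝ) (δ y₀ yInf : ℝ)
    (hC2 : ContDiff ℝ 2 h) (hh0 : h 0 = 0)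
    (hh' : ∀ y, 0 < deriv h y)
    (hh'' : ∀ y, 0 ≤ deriv (deriv h) y)
    (hlamC1 : ContDiff ℝ 1 lam) (hlampos : ∀ y, 0 < lam y)
    (hhlam' : ∀ y, 0 < deriv (fun z => h z * lam z) y)
    (hδ : 0 < δ)
    (hy₀lt : y₀ < 0) (hyInflt : yInf < y₀)
    (hy₀ : h y₀ * lam y₀ + δ = 0)
    (hyInf : h yInf * lam yInf + deriv h yInf + δ = 0)
    (θfun yb : ℝ → ℝ)
    (hθ0 : θfun y₀ = 0)
    (hθ' : ∀ y ∈ Set.Ioc yInf y₀, HasDerivAt θfun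
      (1 + h y * lam y / δ - h y * deriv (deriv h) y / (δ * deriv h y)
        + h y * deriv (fun z => h z * lam z + deriv h z + δ) y
            / (δ * (h y * lam y + deriv h y + δ))) y)
    (hyb_mem : ∀ t ≥ (0:ℝ), yb t ∈ Set.Ioc yInf y₀)
    (hyb_inv : ∀ t ≥ (0:ℝ), θfun (yb t) = t) :
    ∀ θ ≥ (0:ℝ),
      (∫ x in (0:ℝ)..θ,
          deriv h (yb x) / (h (yb x) * lam (yb x) + deriv h (yb x) + δ))
        = h (yb θ) * (h (yb θ) * lam (yb θ) + δ)
            / (δ * (h (yb θ) * lam (yb θ) + deriv h (yb θ) + δ)) :=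
  stmt8_general h lam δ y₀ yInf hC2 hh0 hh' hh'' hlamC1 hhlam' hδ hy₀lt hy₀ hyInf θfun yb hθ0 hθ'
    hyb_mem hyb_inv
end

section
/- Under the standing assumptions, the map y ↦ (h(y)λ(y) + δ)/h'(y) is strictly increasing on (-∞, y₀]. Consequently, for y ≤ y_b ≤ y₀, one has (h(y)λ(y) + δ)/h'(y) ≤ (h(y_b)λ(y_b) + δ)/h'(y_b), which yields h(y)λ(y) + h'(y) + δ - (h'(y)/h'(y_b))·(h(y_b)λ(y_b) + h'(y_b) + δ) ≤ 0. -/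
open Real

/-! The numerator `hλ + δ` is strictly increasing (its derivative is `(hλ)' > 0`) and vanishes at
`y₀`, so it is nonpositive on `(-∞, y₀]`, while the denominator `h'` is positive and increasing
because `h'' ≥ 0`. Dividing a nonpositive increasing quantity by a positive increasing one gives
an increasing quotient. The buy-region inequality is that comparison of quotients, cleared of
denominators. -/

theorem StrictMonoOn.div_of_nonpos {s : Set ℝ} {f g : ℝ → ℝ} (hf : StrictMonoOn f s)
    (hf_nonpos : ∀ x ∈ s, f x ≤ 0) (hg : MonotoneOn g s) (hg_pos : ∀ x ∈ s, 0 < g x) :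
    StrictMonoOn (fun x => f x / g x) s := by
  intro a ha b hb hab
  calc f a / g a < f b / g a := div_lt_div_of_pos_right (hf ha hb hab) (hg_pos a ha)
    _ ≤ f b / g b := by
      rw [div_eq_mul_inv, div_eq_mul_inv]
      exact mul_le_mul_of_nonpos_left
        ((inv_le_inv₀ (hg_pos b hb) (hg_pos a ha)).2 (hg ha hb hab.le)) (hf_nonpos b hb)

theorem add_add_sub_div_mul_nonpos_of_div_le_div {a b c d e : ℝ} (hd : 0 < d) (he : 0 < e)
    (h : (a + c) / d ≤ (b + c) / e) : a + d + c - d / e * (b + e + c) ≤ 0 := by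
  rw [div_le_div_iff₀ hd he] at h
  rw [div_mul_eq_mul_div, sub_nonpos, le_div_iff₀ he]
  linarith

theorem stmt13_general (h lam : ℝ → ℝ) (δ y₀ : ℝ)
    (hC2 : ContDiff ℝ 2 h)
    (hh' : ∀ y, 0 < deriv h y)
    (hh'' : ∀ y, 0 ≤ deriv (deriv h) y)
    (hhlam' : ∀ y, 0 < deriv (fun z => h z * lam z) y)
    (hy₀ : h y₀ * lam y₀ + δ = 0) :
    StrictMonoOn (fun y => (h y * lam y + δ) / deriv h y) (Set.Iic y₀) ∧
    ∀ y yb : ℝ, y ≤ yb → yb ≤ y₀ →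
      (h y * lam y + δ) / deriv h y ≤ (h yb * lam yb + δ) / deriv h yb ∧
      h y * lam y + deriv h y + δ
        - (deriv h y / deriv h yb) * (h yb * lam yb + deriv h yb + δ) ≤ 0 := by
  have hnum : StrictMono (fun y => h y * lam y + δ) := (strictMono_of_deriv_pos hhlam').add_const δ
  have hnum_nonpos : ∀ y ∈ Set.Iic y₀, h y * lam y + δ ≤ 0 := fun y hy => hy₀ ▸ hnum.monotone hy
  have hden : Monotone (deriv h) := monotone_of_deriv_nonneg hC2.differentiable_deriv_two hh''
  have hquot := (hnum.strictMonoOn _).div_of_nonpos hnum_nonpos (hden.monotoneOn _)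
    fun y _ => hh' y
  refine ⟨hquot, fun y yb hy hyb => ?_⟩
  have hle := hquot.monotoneOn (Set.mem_Iic.2 (hy.trans hyb)) (Set.mem_Iic.2 hyb) hy
  exact ⟨hle, add_add_sub_div_mul_nonpos_of_div_le_div (hh' y) (hh' yb) hle⟩

/-- The map `y ↦ (hλ+δ)/h'` is strictly increasing on `(-∞, y₀]`; hence for
`y ≤ y_b ≤ y₀` the key buy-region inequality
`hλ(y)+h'(y)+δ - (h'(y)/h'(y_b))(hλ(y_b)+h'(y_b)+δ) ≤ 0` holds. -/
theorem stmt13 (h lam : ℝ → ℝ) (δ y₀ : ℝ)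
    (hC2 : ContDiff ℝ 2 h) (hh0 : h 0 = 0)
    (hh' : ∀ y, 0 < deriv h y)
    (hh'' : ∀ y, 0 ≤ deriv (deriv h) y)
    (hlamC1 : ContDiff ℝ 1 lam) (hlampos : ∀ y, 0 < lam y)
    (hhlam' : ∀ y, 0 < deriv (fun z => h z * lam z) y)
    (hδ : 0 < δ)
    (hy₀lt : y₀ < 0)
    (hy₀ : h y₀ * lam y₀ + δ = 0) :
    StrictMonoOn (fun y => (h y * lam y + δ) / deriv h y) (Set.Iic y₀) ∧
    ∀ y yb : ℝ, y ≤ yb → yb ≤ y₀ →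
      (h y * lam y + δ) / deriv h y ≤ (h yb * lam yb + δ) / deriv h yb ∧
      h y * lam y + deriv h y + δ
        - (deriv h y / deriv h yb) * (h yb * lam yb + deriv h yb + δ) ≤ 0 :=
  stmt13_general h lam δ y₀ hC2 hh' hh'' hhlam' hy₀
end

section
/- Let h(y) = βy, λ(y) = 1/(c + y·0) = 1/c (case r = 1), with β, c, δ > 0, so y₀ = -cδ/β and y_∞ = -c(β+δ)/β. Then the time-to-liquidation function τ(y) = -y/(δc) - 1/β - (1/δ) log(y/c + 1 + δ/β) satisfies: τ(y₀) = 0, τ is strictly decreasing on (y_∞, y₀], and τ(y) → +∞ as y ↘ y_∞. -/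
open Real Filter

/-! In the variable `u = (y - y_∞)/c`, which is `1` at `y₀`, the time-to-liquidation is
`τ = (1 - u - log u)/δ`; the function `1 - u - log u` vanishes at `1`, is strictly decreasing
on `(0, ∞)` and blows up as `u ↘ 0`. -/

lemma strictAntiOn_one_sub_sub_log : StrictAntiOn (fun u : ℝ => 1 - u - log u) (Set.Ioi 0) := by
  intro x hx y _ hxy
  have := log_lt_log hx hxy
  simp only
  linarith

lemma tendsto_one_sub_sub_log_nhdsGT_zero :
    Tendsto (fun u : ℝ => 1 - u - log u) (nhdsWithin 0 (Set.Ioi 0)) atTop := by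
  have hlin : Tendsto (fun u : ℝ => 1 - u) (nhdsWithin 0 (Set.Ioi 0)) (nhds 1) := by
    simpa using (tendsto_const_nhds.sub tendsto_id).mono_left (nhdsWithin_le_nhds (a := (0 : ℝ)))
  simpa only [sub_eq_add_neg] using hlin.add_atTop (tendsto_neg_atTop_iff.mpr tendsto_log_nhdsGT_zero)

section Rescaled

variable {a c δ : ℝ}

lemma strictAntiOn_one_sub_sub_log_rescaled (hc : 0 < c) (hδ : 0 < δ) :
    StrictAntiOn (fun y => (1 - (y - a) / c - log ((y - a) / c)) / δ) (Set.Ioi a) := by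
  intro x hx y hy hxy
  have hpos : ∀ z ∈ Set.Ioi a, (z - a) / c ∈ Set.Ioi 0 := fun z hz =>
    div_pos (sub_pos.mpr hz) hc
  refine div_lt_div_of_pos_right ?_ hδ
  exact strictAntiOn_one_sub_sub_log (hpos x hx) (hpos y hy) (by gcongr)

lemma tendsto_one_sub_sub_log_rescaled (hc : 0 < c) (hδ : 0 < δ) :
    Tendsto (fun y => (1 - (y - a) / c - log ((y - a) / c)) / δ)
      (nhdsWithin a (Set.Ioi a)) atTop := by
  have hu : Tendsto (fun y => (y - a) / c) (nhdsWithin a (Set.Ioi a))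
      (nhdsWithin 0 (Set.Ioi 0)) := by
    refine tendsto_nhdsWithin_of_tendsto_nhds_of_eventually_within _ ?_ ?_
    · have := ((continuous_sub_right a).div_const c).tendsto a
      simpa using this.mono_left (nhdsWithin_le_nhds (s := Set.Ioi a))
    · filter_upwards [self_mem_nhdsWithin] with y hy
      exact div_pos (sub_pos.mpr hy) hc
  exact (tendsto_one_sub_sub_log_nhdsGT_zero.comp hu).atTop_div_const hδ

end Rescaled

/-- Example 4.4 with `r = 1`: the time-to-liquidation
`τ(y) = -y/(δc) - 1/β - (1/δ) log(y/c + 1 + δ/β)` vanishes at `y₀ = -cδ/β`,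
is strictly decreasing on `(y_∞, y₀]` with `y_∞ = -c(β+δ)/β`, and tends to `+∞`
as `y ↘ y_∞`. -/
theorem stmt15 (β c δ : ℝ) (hβ : 0 < β) (hc : 0 < c) (hδ : 0 < δ)
    (τ : ℝ → ℝ)
    (hτ : ∀ y, τ y = -y / (δ * c) - 1 / β - (1 / δ) * Real.log (y / c + 1 + δ / β)) :
    let y₀ := -c * δ / β
    let yInf := -c * (β + δ) / β
    τ y₀ = 0 ∧
    StrictAntiOn τ (Set.Ioc yInf y₀) ∧
    Tendsto τ (nhdsWithin yInf (Set.Ioi yInf)) atTop := by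
  intro y₀ yInf
  have hτ_eq : τ = fun y => (1 - (y - yInf) / c - log ((y - yInf) / c)) / δ := by
    funext y
    rw [hτ]
    have hu : (y - yInf) / c = y / c + 1 + δ / β := by
      simp only [yInf]; field_simp; ring
    rw [hu]; field_simp; ring
  have hy₀ : (y₀ - yInf) / c = 1 := by simp only [y₀, yInf]; field_simp; ring
  refine ⟨?_, ?_, ?_⟩
  · simp [hτ_eq, hy₀]
  · rw [hτ_eq]
    exact (strictAntiOn_one_sub_sub_log_rescaled hc hδ).mono Set.Ioc_subset_Ioi_self
  · rw [hτ_eq]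
    exact tendsto_one_sub_sub_log_rescaled hc hδ
end

section
/- Let W denote the Lambert W function on (0,∞) (the inverse of x ↦ x e^x restricted to x ≥ 0), and let h(y)=βy, λ(y)=1/c with β, c, δ > 0. Then ȳ(τ) := cW(e^{1-δτ}) - c(β+δ)/β satisfies the implicit relation e^{-δτ} = (f(ȳ(τ))/f(y₀))·(βȳ(τ)/c + β + δ)/β where f(y)=e^{y/c} and y₀ = -cδ/β, for all τ ≥ 0. -/
open Real

/-! Put `w = W(e^{1-δτ})`. Then `ȳ/c - y₀/c = w - 1` and `βȳ/c + β + δ = βw`, so the right-hand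
side is `e^{w-1} w`, which is `e^{-δτ}` by the defining equation `w e^w = e^{1-δτ}`. -/

lemma exp_sub_one_mul_eq_of_mul_exp_eq {w t : ℝ} (h : w * exp w = exp (1 + t)) :
    exp (w - 1) * w = exp t := by
  rw [exp_sub, div_mul_eq_mul_div, mul_comm, h, exp_add, mul_div_cancel_left₀ _ (exp_pos 1).ne']

theorem stmt16_general (β c δ : ℝ) (hβ : 0 < β) (hc : 0 < c)
    (W : ℝ → ℝ)
    (hW : ∀ x > (0:ℝ), W x * Real.exp (W x) = x)
    (f : ℝ → ℝ) (hf : ∀ y, f y = Real.exp (y / c)) :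
    ∀ τ ≥ (0:ℝ),
      let ybar := c * W (Real.exp (1 - δ * τ)) - c * (β + δ) / β
      let y₀ := -c * δ / β
      Real.exp (-δ * τ)
        = (f ybar / f y₀) * (β * ybar / c + β + δ) / β := by
  intro τ _ ybar y₀
  set w := W (exp (1 - δ * τ))
  have hw : w * exp w = exp (1 + -δ * τ) := by
    rw [neg_mul, ← sub_eq_add_neg]
    exact hW _ (exp_pos _)
  have h_exponent : ybar / c - y₀ / c = w - 1 := by
    simp only [ybar, y₀]
    field_simp
    ring
  have h_factor : β * ybar / c + β + δ = β * w := by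
    simp only [ybar]
    field_simp
    ring
  rw [hf, hf, ← exp_sub, h_exponent, h_factor, mul_left_comm, mul_div_cancel_left₀ _ hβ.ne',
    exp_sub_one_mul_eq_of_mul_exp_eq hw]

/-- With `W` the Lambert W function on `(0,∞)`, `f(y)=e^{y/c}`, `h(y)=βy`,
`y₀ = -cδ/β`, the curve `ȳ(τ) = cW(e^{1-δτ}) - c(β+δ)/β` satisfies the implicit
boundary relation `e^{-δτ} = (f(ȳ)/f(y₀))·(βȳ/c + β + δ)/β` for all `τ ≥ 0`. -/
theorem stmt16 (β c δ : ℝ) (hβ : 0 < β) (hc : 0 < c) (hδ : 0 < δ)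
    (W : ℝ → ℝ)
    (hW_nonneg : ∀ x > (0:ℝ), 0 ≤ W x)
    (hW : ∀ x > (0:ℝ), W x * Real.exp (W x) = x)
    (f : ℝ → ℝ) (hf : ∀ y, f y = Real.exp (y / c)) :
    ∀ τ ≥ (0:ℝ),
      let ybar := c * W (Real.exp (1 - δ * τ)) - c * (β + δ) / β
      let y₀ := -c * δ / β
      Real.exp (-δ * τ)
        = (f ybar / f y₀) * (β * ybar / c + β + δ) / β :=
  stmt16_general β c δ hβ hc W hW f hf
end

section
/- Let h be C² strictly increasing with h(0)=0, h''≥0, λ>0 C¹ with (hλ)'>0, δ>0, f'=λf with f(0)=1, and define g(x) := f(h⁻¹(x))·x + δ·F(h⁻¹(x)) for x in the range of h, where F(y)=∫_0^y f. Then g'(x) = (f(y)/h'(y))·(h(y)λ(y) + h'(y) + δ) at y = h⁻¹(x); consequently g is decreasing on (h(-∞), h(y_∞)], increasing on [h(y_∞), h(∞)), where y_∞ is the root of hλ + h' + δ = 0. -/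
/-!
Differentiating `g ∘ h` with the chain rule for the inverse of `h` gives the formula for `g'`,
whose sign is that of `φ = hλ + h' + δ`. Since `φ' = (hλ)' + h'' > 0`, `φ` is increasing
and vanishes at `y_∞`, so `g' ≤ 0` on `h((-∞, y_∞])` and `g' ≥ 0` on `h([y_∞, ∞))`; these
images are intervals because `h` is continuous.
-/

open Real intervalIntegral Filter Topology

theorem hasDerivAt_mul_add_const_mul_comp_leftInverse {h hinv f F : ℝ → ℝ} {h' f' δ y : ℝ}
    (hh : HasStrictDerivAt h h' y) (hh' : h' ≠ 0) (hleft : ∀ᶠ z in 𝓝 y, hinv (h z) = z)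
    (hf : HasDerivAt f f' y) (hF : HasDerivAt F (f y) y) :
    HasDerivAt (fun x => f (hinv x) * x + δ * F (hinv x))
      ((f' * h y + f y * (h' + δ)) / h') (h y) := by
  have hinvd : HasDerivAt hinv h'⁻¹ (h y) := (hh.to_local_left_inverse hh' hleft).hasDerivAt
  have hy : hinv (h y) = y := hleft.self_of_nhds
  have hfi : HasDerivAt (fun x => f (hinv x)) (f' * h'⁻¹) (h y) :=
    hf.comp_of_eq (h y) hinvd hy.symm
  have hFi : HasDerivAt (fun x => F (hinv x)) (f y * h'⁻¹) (h y) :=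
    hF.comp_of_eq (h y) hinvd hy.symm
  refine ((hfi.mul (hasDerivAt_id (h y))).add (hFi.const_mul δ)).congr_deriv ?_
  simp only [hy, id_eq]
  field_simp
  ring

theorem monotoneOn_image_of_hasDerivAt_nonneg {h g g' : ℝ → ℝ} {s : Set ℝ}
    (hs : IsPreconnected s) (hh : ContinuousOn h s)
    (hg : ∀ y ∈ s, HasDerivAt g (g' y) (h y)) (hg' : ∀ y ∈ s, 0 ≤ g' y) :
    MonotoneOn g (h '' s) := by
  refine monotoneOn_of_deriv_nonneg (hs.image h hh).convex ?_ ?_ ?_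
  · rintro _ ⟨y, hy, rfl⟩
    exact (hg y hy).continuousAt.continuousWithinAt
  · rintro _ hx
    obtain ⟨y, hy, rfl⟩ := interior_subset hx
    exact (hg y hy).differentiableAt.differentiableWithinAt
  · rintro _ hx
    obtain ⟨y, hy, rfl⟩ := interior_subset hx
    exact (hg y hy).deriv ▸ hg' y hy

theorem antitoneOn_image_of_hasDerivAt_nonpos {h g g' : ℝ → ℝ} {s : Set ℝ}
    (hs : IsPreconnected s) (hh : ContinuousOn h s)
    (hg : ∀ y ∈ s, HasDerivAt g (g' y) (h y)) (hg' : ∀ y ∈ s, g' y ≤ 0) :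
    AntitoneOn g (h '' s) := by
  have := monotoneOn_image_of_hasDerivAt_nonneg hs hh (fun y hy => (hg y hy).neg)
    (fun y hy => neg_nonneg.mpr (hg' y hy))
  exact fun a ha b hb hab => neg_le_neg_iff.mp (this ha hb hab)

theorem monotone_mul_add_deriv_add {h lam : ℝ → ℝ} (δ : ℝ) (hh : ContDiff ℝ 2 h)
    (hlam : Differentiable ℝ lam) (hhlam' : ∀ y, 0 ≤ deriv (fun z => h z * lam z) y)
    (hh'' : ∀ y, 0 ≤ deriv (deriv h) y) :
    Monotone (fun z => h z * lam z + deriv h z + δ) := by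
  have hd : Differentiable ℝ h := hh.differentiable (by norm_num)
  have hd' : Differentiable ℝ (deriv h) :=
    (hh.iterate_deriv' 1 1).differentiable (by norm_num)
  have hφ : ∀ y, HasDerivAt (fun z => h z * lam z + deriv h z + δ)
      (deriv (fun z => h z * lam z) y + deriv (deriv h) y) y := fun y =>
    (((hd.mul hlam) y).hasDerivAt.add (hd' y).hasDerivAt).add_const δ
  exact monotone_of_deriv_nonneg (fun y => (hφ y).differentiableAt)
    fun y => (hφ y).deriv ▸ add_nonneg (hhlam' y) (hh'' y)

theorem stmt19_general (h lam : ℝ → ℝ) (δ yInf : ℝ)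
    (hC2 : ContDiff ℝ 2 h)
    (hh' : ∀ y, 0 < deriv h y)
    (hh'' : ∀ y, 0 ≤ deriv (deriv h) y)
    (hlamC1 : ContDiff ℝ 1 lam)
    (hhlam' : ∀ y, 0 < deriv (fun z => h z * lam z) y)
    (hyInf : h yInf * lam yInf + deriv h yInf + δ = 0)
    (f F hinv g : ℝ → ℝ)
    (hf : ∀ y, f y = Real.exp (∫ x in (0:ℝ)..y, lam x))
    (hF : ∀ y, F y = ∫ x in (0:ℝ)..y, f x)
    (hinv_left : ∀ y, hinv (h y) = y)
    (hg : ∀ x, g x = f (hinv x) * x + δ * F (hinv x)) :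
    (∀ y : ℝ, HasDerivAt g
      ((f y / deriv h y) * (h y * lam y + deriv h y + δ)) (h y)) ∧
    AntitoneOn g (h '' Set.Iic yInf) ∧
    MonotoneOn g (h '' Set.Ici yInf) := by
  have hfd : ∀ y, HasDerivAt f (f y * lam y) y := fun y => funext hf ▸
    (hlamC1.continuous.integral_hasStrictDerivAt 0 y).hasDerivAt.exp
  have hFd : ∀ y, HasDerivAt F (f y) y := fun y => funext hF ▸
    ((continuous_iff_continuousAt.mpr fun z => (hfd z).continuousAt).integral_hasStrictDerivAt
      0 y).hasDerivAt
  have hderiv : ∀ y : ℝ, HasDerivAt g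
      ((f y / deriv h y) * (h y * lam y + deriv h y + δ)) (h y) := by
    intro y
    rw [funext hg]
    convert hasDerivAt_mul_add_const_mul_comp_leftInverse (hC2.hasStrictDerivAt (by norm_num))
      (hh' y).ne' (.of_forall hinv_left) (hfd y) (hFd y) using 1
    ring
  have hcoef : ∀ y, 0 ≤ f y / deriv h y := fun y =>
    div_nonneg (hf y ▸ exp_pos _).le (hh' y).le
  have hφ := monotone_mul_add_deriv_add δ hC2 (hlamC1.differentiable (by norm_num))
    (fun y => (hhlam' y).le) hh''
  refine ⟨hderiv, ?_, ?_⟩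
  · refine antitoneOn_image_of_hasDerivAt_nonpos isPreconnected_Iic
      hC2.continuous.continuousOn (fun y _ => hderiv y) fun y hy => ?_
    exact mul_nonpos_of_nonneg_of_nonpos (hcoef y) (hyInf ▸ hφ hy)
  · refine monotoneOn_image_of_hasDerivAt_nonneg isPreconnected_Ici
      hC2.continuous.continuousOn (fun y _ => hderiv y) fun y hy => ?_
    exact mul_nonneg (hcoef y) (hyInf ▸ hφ hy)

/-- Remark 3.5: for `g(x) = f(h⁻¹(x))·x + δ·F(h⁻¹(x))` one has
`g'(h(y)) = (f(y)/h'(y))(h(y)λ(y) + h'(y) + δ)`; consequently `g` is decreasing on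
`h((-∞, y_∞])` and increasing on `h([y_∞, ∞))`, where `y_∞` solves `hλ+h'+δ = 0`. -/
theorem stmt19 (h lam : ℝ → ℝ) (δ yInf : ℝ)
    (hC2 : ContDiff ℝ 2 h) (hh0 : h 0 = 0)
    (hmono : StrictMono h)
    (hh' : ∀ y, 0 < deriv h y)
    (hh'' : ∀ y, 0 ≤ deriv (deriv h) y)
    (hlamC1 : ContDiff ℝ 1 lam) (hlampos : ∀ y, 0 < lam y)
    (hhlam' : ∀ y, 0 < deriv (fun z => h z * lam z) y)
    (hδ : 0 < δ)
    (hyInf : h yInf * lam yInf + deriv h yInf + δ = 0)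
    (hyInfuniq : ∀ z, h z * lam z + deriv h z + δ = 0 → z = yInf)
    (f F hinv g : ℝ → ℝ)
    (hf : ∀ y, f y = Real.exp (∫ x in (0:ℝ)..y, lam x))
    (hF : ∀ y, F y = ∫ x in (0:ℝ)..y, f x)
    (hinv_left : ∀ y, hinv (h y) = y)
    (hg : ∀ x, g x = f (hinv x) * x + δ * F (hinv x)) :
    (∀ y : ℝ, HasDerivAt g
      ((f y / deriv h y) * (h y * lam y + deriv h y + δ)) (h y)) ∧
    AntitoneOn g (h '' Set.Iic yInf) ∧
    MonotoneOn g (h '' Set.Ici yInf) :=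
  stmt19_general h lam δ yInf hC2 hh' hh'' hlamC1 hhlam' hyInf f F hinv g hf hF hinv_left hg
end
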